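/- Let n ≥ 2 and let A be a real n×n singular irreducible M-matrix. For every nonzero pattern S_L ⊆ {(i,j) : 1 ≤ j ≤ i ≤ n} that contains all diagonal pairs (i,i) and does not contain (n,n−1), there exists a unique lower triangular matrix L_G such that (L_G)_{ij} = 0 for all (i,j) ∉ S_L and (L_G A)_{ij} = δ_{ij} for all (i,j) ∈ S_L. -/

import Mathlib

open Matrix

/-- The spectral radius of a real matrix: the maximum modulus of its complex
eigenvalues (supremum of moduli of elements of the complex spectrum). -/
noncomputable def specRad {n : ℕ} (B : Matrix (Fin n) (Fin n) ℝ) : ℝ :=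
  sSup ((fun z : ℂ => ‖z‖) '' spectrum ℂ (B.map Complex.ofReal))

/-- A real square matrix is a Z-matrix if its off-diagonal entries are nonpositive. -/
def IsZMatrix {n : ℕ} (A : Matrix (Fin n) (Fin n) ℝ) : Prop :=
  ∀ i j, i ≠ j → A i j ≤ 0

/-- A Z-matrix `A` is a nonsingular M-matrix if `A = s • 1 - B` with `B`
entrywise nonnegative and `s > ρ(B)`. -/
def IsNonsingularMMatrix {n : ℕ} (A : Matrix (Fin n) (Fin n) ℝ) : Prop :=
  IsZMatrix A ∧ ∃ (s : ℝ) (B : Matrix (Fin n) (Fin n) ℝ),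
    (∀ i j, 0 ≤ B i j) ∧ specRad B < s ∧ A = s • (1 : Matrix (Fin n) (Fin n) ℝ) - B

/-- A Z-matrix `A` is a singular M-matrix if `A = ρ(B) • 1 - B` with `B`
entrywise nonnegative. -/
def IsSingularMMatrix {n : ℕ} (A : Matrix (Fin n) (Fin n) ℝ) : Prop :=
  IsZMatrix A ∧ ∃ B : Matrix (Fin n) (Fin n) ℝ,
    (∀ i j, 0 ≤ B i j) ∧ A = specRad B • (1 : Matrix (Fin n) (Fin n) ℝ) - B

/-- A matrix is irreducible if its directed graph (edge `i → j` iff `A i j ≠ 0`)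
is strongly connected. -/
def IsIrreducibleMatrix {n : ℕ} (A : Matrix (Fin n) (Fin n) ℝ) : Prop :=
  ∀ i j : Fin n, Relation.ReflTransGen (fun a b : Fin n => A a b ≠ 0) i j

/-- Lower triangular real matrix. -/
def IsLowerTri {n : ℕ} (L : Matrix (Fin n) (Fin n) ℝ) : Prop :=
  ∀ i j : Fin n, i < j → L i j = 0

/-- Upper triangular real matrix. -/
def IsUpperTri {n : ℕ} (U : Matrix (Fin n) (Fin n) ℝ) : Prop :=
  ∀ i j : Fin n, j < i → U i j = 0

/-- `L` is an FSAI lower triangular factor of `A` for the pattern `S`: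
`L` is lower triangular, vanishes off the pattern, and `(L * A) i j = δ i j`
on the pattern. -/
def IsFSAILowerFactor {n : ℕ} (A L : Matrix (Fin n) (Fin n) ℝ)
    (S : Set (Fin n × Fin n)) : Prop :=
  IsLowerTri L ∧ (∀ p : Fin n × Fin n, p ∉ S → L p.1 p.2 = 0) ∧
    ∀ p : Fin n × Fin n, p ∈ S → (L * A) p.1 p.2 = if p.1 = p.2 then 1 else 0

/-- `U` is an FSAI upper triangular factor of `A` for the pattern `S`:
`U` is upper triangular, vanishes off the pattern, and `(A * U) i j = δ i j`
on the pattern. -/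
def IsFSAIUpperFactor {n : ℕ} (A U : Matrix (Fin n) (Fin n) ℝ)
    (S : Set (Fin n × Fin n)) : Prop :=
  IsUpperTri U ∧ (∀ p : Fin n × Fin n, p ∉ S → U p.1 p.2 = 0) ∧
    ∀ p : Fin n × Fin n, p ∈ S → (A * U) p.1 p.2 = if p.1 = p.2 then 1 else 0

/-!
Row `i` of `L` is the solution of the square system `r · A[α, α] = eᵢ` on
`α = {j | (i, j) ∈ S}`; as `S` is lower triangular and misses `(n, n - 1)`, each `α` is a proper
subset, so it suffices that proper principal submatrices of a singular irreducible M-matrix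
`A = ρ(B) • 1 - B` are nonsingular. A kernel vector `v` of `A[α, α]` gives `w = |v|` (extended by
zero) with `0 ≤ w ≠ 0`, `ρ(B) w ≤ B w` and `w = 0` off `α`. This contradicts Perron–Frobenius:
with `P = (1 + B)ᴺ` entrywise positive, `P w > 0`; if `B w = ρ(B) w` then `P w` is a multiple
of `w`, and otherwise `B (P w) > ρ(B) (P w)` entrywise, which violates the Collatz–Wielandt
bound (`B u ≥ s u` with `0 ≤ u ≠ 0` forces `s ≤ ρ(B)`, by Gelfand's formula).
-/

open Filter

attribute [local instance] Matrix.linftyOpNormedRing Matrix.linftyOpNormedAlgebra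

theorem ofReal_le_spectralRadius_of_pow_le_norm_pow {A : Type*} [NormedRing A]
    [NormedAlgebra ℂ A] [CompleteSpace A] {a : A} {s : ℝ} (hs : 0 ≤ s)
    (h : ∀ m : ℕ, s ^ m ≤ ‖a ^ m‖) : ENNReal.ofReal s ≤ spectralRadius ℂ a := by
  refine ge_of_tendsto (spectrum.pow_norm_pow_one_div_tendsto_nhds_spectralRadius a) ?_
  filter_upwards [eventually_ne_atTop 0] with m hm
  refine ENNReal.ofReal_le_ofReal ?_
  calc s = (s ^ m) ^ (1 / m : ℝ) := by rw [one_div, Real.pow_rpow_inv_natCast hs hm]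
    _ ≤ ‖a ^ m‖ ^ (1 / m : ℝ) := by gcongr; exact h m

theorem Finset.sum_univ_eq_sum_coe_sort_of_support {ι M : Type*} [Fintype ι] [AddCommMonoid M]
    {α : Finset ι} {f : ι → M} (hf : ∀ i ∉ α, f i = 0) : ∑ i, f i = ∑ i : α, f i :=
  (Finset.sum_subset (Finset.subset_univ α) fun i _ hi => hf i hi).symm.trans
    (Finset.sum_coe_sort α f).symm

abbrev Matrix.principalSubmatrix {ι R : Type*} (A : Matrix ι ι R) (α : Finset ι) :
    Matrix α α R :=
  A.submatrix (↑) (↑)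

theorem existsUnique_vecMul_eq_of_isUnit_principalSubmatrix {ι K : Type*} [Fintype ι]
    [DecidableEq ι] [Field K] {A : Matrix ι ι K} {α : Finset ι}
    (hA : IsUnit (A.principalSubmatrix α)) (e : ι → K) :
    ∃! r : ι → K, (∀ j ∉ α, r j = 0) ∧ ∀ j ∈ α, (r ᵥ* A) j = e j := by
  have hvecMul : ∀ r : ι → K, (∀ i ∉ α, r i = 0) → ∀ j : α,
      (r ᵥ* A) j = ((fun i : α => r i) ᵥ* A.principalSubmatrix α) j :=
    fun r hr j => Finset.sum_univ_eq_sum_coe_sort_of_support (α := α) fun i hi => by simp [hr i hi]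
  obtain ⟨x, hx⟩ := vecMul_surjective_iff_isUnit.mpr hA fun j : α => e j
  let r : ι → K := fun i => if h : i ∈ α then x ⟨i, h⟩ else 0
  have hr : ∀ i ∉ α, r i = 0 := fun i hi => dif_neg hi
  refine ⟨r, ⟨hr, fun j hj => ?_⟩, fun r' ⟨hr', hr'A⟩ => funext fun i => ?_⟩
  · rw [hvecMul r hr ⟨j, hj⟩]
    simp [r, hx]
  · have hrestr : (fun i : α => r' i) = x := vecMul_injective_iff_isUnit.mpr hA <|
      (funext fun j => (hvecMul r' hr' j).symm.trans (hr'A j j.2)).trans hx.symm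
    by_cases hi : i ∈ α
    · simp [r, hi, ← hrestr]
    · rw [hr i hi, hr' i hi]

section Nonneg

variable {ι : Type*} [Fintype ι] {B : Matrix ι ι ℝ}

theorem mulVec_mono_of_nonneg (hB : ∀ i j, 0 ≤ B i j) : Monotone (B *ᵥ ·) :=
  fun _ _ huv i => Finset.sum_le_sum fun j _ => mul_le_mul_of_nonneg_left (huv j) (hB i j)

theorem mulVec_pos_of_pos {P : Matrix ι ι ℝ} (hP : ∀ i j, 0 < P i j) {u : ι → ℝ} (hu : 0 ≤ u)
    (hu0 : u ≠ 0) (i : ι) : 0 < (P *ᵥ u) i := by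
  obtain ⟨j, hj⟩ := Function.ne_iff.mp hu0
  exact Finset.sum_pos' (fun k _ => mul_nonneg (hP i k).le (hu k))
    ⟨j, Finset.mem_univ j, mul_pos (hP i j) ((hu j).lt_of_ne' hj)⟩

variable [DecidableEq ι]

theorem pow_smul_le_pow_mulVec (hB : ∀ i j, 0 ≤ B i j) {u : ι → ℝ} {s : ℝ} (hs : 0 ≤ s)
    (hsu : s • u ≤ B *ᵥ u) (m : ℕ) : s ^ m • u ≤ (B ^ m) *ᵥ u := by
  induction m with
  | zero => simp
  | succ m ih =>
    calc s ^ (m + 1) • u = s ^ m • s • u := by rw [pow_succ, mul_smul]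
      _ ≤ s ^ m • (B *ᵥ u) := smul_le_smul_of_nonneg_left hsu (pow_nonneg hs m)
      _ = B *ᵥ (s ^ m • u) := (mulVec_smul _ _ _).symm
      _ ≤ B *ᵥ ((B ^ m) *ᵥ u) := mulVec_mono_of_nonneg hB ih
      _ = (B ^ (m + 1)) *ᵥ u := by rw [mulVec_mulVec, pow_succ']

theorem pow_mulVec_of_mulVec_eq_smul {u : ι → ℝ} {c : ℝ} (h : B *ᵥ u = c • u) (m : ℕ) :
    (B ^ m) *ᵥ u = c ^ m • u := by
  induction m with
  | zero => simp
  | succ m ih => rw [pow_succ, ← mulVec_mulVec, h, mulVec_smul, ih, smul_smul, pow_succ']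

theorem pow_succ_apply_pos (hB : ∀ i j, 0 ≤ B i j) {m : ℕ} {i j k : ι}
    (hij : 0 < (B ^ m) i j) (hjk : 0 < B j k) : 0 < (B ^ (m + 1)) i k := by
  rw [pow_succ, mul_apply]
  exact Finset.sum_pos' (fun l _ => mul_nonneg (pow_apply_nonneg hB m i l) (hB l k))
    ⟨j, Finset.mem_univ j, mul_pos hij hjk⟩

theorem exists_pow_pos_of_reflTransGen (hB : ∀ i j, 0 ≤ B i j) (hdiag : ∀ i, 0 < B i i)
    (hconn : ∀ i j, Relation.ReflTransGen (fun a b => 0 < B a b) i j) :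
    ∃ N, ∀ i j, 0 < (B ^ N) i j := by
  have hpath : ∀ i j, ∃ m, 0 < (B ^ m) i j := fun i j => by
    induction hconn i j with
    | refl => exact ⟨0, by simp⟩
    | tail _ hbc ih =>
      obtain ⟨m, hm⟩ := ih
      exact ⟨m + 1, pow_succ_apply_pos hB hm hbc⟩
  choose m hm using hpath
  refine ⟨Finset.univ.sup fun p : ι × ι => m p.1 p.2, fun i j => ?_⟩
  have hle : m i j ≤ Finset.univ.sup fun p : ι × ι => m p.1 p.2 :=
    Finset.le_sup (f := fun p : ι × ι => m p.1 p.2) (Finset.mem_univ (i, j))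
  exact Nat.le_induction (hm i j) (fun N _ ih => pow_succ_apply_pos hB ih (hdiag j)) _ hle

end Nonneg

section PerronFrobenius

variable {n : ℕ} {B : Matrix (Fin n) (Fin n) ℝ}

theorem norm_le_specRad {z : ℂ} (hz : z ∈ spectrum ℂ (B.map Complex.ofReal)) :
    ‖z‖ ≤ specRad B :=
  le_csSup ((spectrum.isCompact _).image continuous_norm).bddAbove ⟨z, hz, rfl⟩

theorem specRad_nonneg [Nonempty (Fin n)] (B : Matrix (Fin n) (Fin n) ℝ) : 0 ≤ specRad B :=
  have ⟨_, hz⟩ := spectrum.nonempty (B.map Complex.ofReal)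
  (norm_nonneg _).trans (norm_le_specRad hz)

theorem spectralRadius_le_ofReal_specRad (B : Matrix (Fin n) (Fin n) ℝ) :
    spectralRadius ℂ (B.map Complex.ofReal) ≤ ENNReal.ofReal (specRad B) :=
  iSup₂_le fun z hz => by
    rw [← ENNReal.ofReal_coe_nnreal, coe_nnnorm]
    exact ENNReal.ofReal_le_ofReal (norm_le_specRad hz)

theorem le_specRad_of_smul_le_mulVec (hB : ∀ i j, 0 ≤ B i j) {u : Fin n → ℝ} (hu : 0 ≤ u)
    (hu0 : u ≠ 0) {s : ℝ} (hs : 0 < s) (hsu : s • u ≤ B *ᵥ u) : s ≤ specRad B := by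
  obtain ⟨i₀, hi₀⟩ := Function.ne_iff.mp hu0
  have : Nonempty (Fin n) := ⟨i₀⟩
  obtain ⟨i, hi⟩ := Finite.exists_max u
  have hui : 0 < u i := ((hu i₀).lt_of_ne' hi₀).trans_le (hi i₀)
  have hnorm : ∀ m : ℕ, s ^ m ≤ ‖B.map Complex.ofReal ^ m‖ := fun m => by
    have hpow : s ^ m * u i ≤ ((B ^ m) *ᵥ u) i := pow_smul_le_pow_mulVec hB hs.le hsu m i
    refine le_of_mul_le_mul_right ?_ hui
    calc s ^ m * u i ≤ ((B ^ m) *ᵥ u) i := hpow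
      _ = ‖(B.map Complex.ofReal ^ m *ᵥ (Complex.ofReal ∘ u)) i‖ := by
        rw [← Complex.norm_of_nonneg (hpow.trans' (by positivity)), ← Complex.ofRealHom_eq_coe,
          RingHom.map_mulVec, Matrix.map_pow]
        rfl
      _ ≤ ‖B.map Complex.ofReal ^ m *ᵥ (Complex.ofReal ∘ u)‖ := norm_le_pi_norm _ i
      _ ≤ ‖B.map Complex.ofReal ^ m‖ * ‖Complex.ofReal ∘ u‖ := linfty_opNorm_mulVec _ _
      _ ≤ ‖B.map Complex.ofReal ^ m‖ * u i := by
        gcongr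
        refine (pi_norm_le_iff_of_nonneg hui.le).mpr fun j => ?_
        simpa [abs_of_nonneg (hu j)] using hi j
  have := (ofReal_le_spectralRadius_of_pow_le_norm_pow hs.le hnorm).trans
    (spectralRadius_le_ofReal_specRad B)
  exact (ENNReal.ofReal_le_ofReal_iff'.mp this).resolve_right hs.not_ge

theorem lt_specRad_of_smul_lt_mulVec [Nonempty (Fin n)] (hB : ∀ i j, 0 ≤ B i j)
    {u : Fin n → ℝ} (hu : ∀ i, 0 < u i) {s : ℝ} (hs : 0 ≤ s)
    (hsu : ∀ i, s * u i < (B *ᵥ u) i) : s < specRad B := by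
  obtain ⟨i₀, hi₀⟩ := Finite.exists_min fun i => ((B *ᵥ u) i - s * u i) / u i
  set ε := ((B *ᵥ u) i₀ - s * u i₀) / u i₀
  have hε : 0 < ε := div_pos (sub_pos.mpr (hsu i₀)) (hu i₀)
  have hεu : (s + ε) • u ≤ B *ᵥ u := fun i => by
    have := (le_div_iff₀ (hu i)).mp (hi₀ i)
    simp only [Pi.smul_apply, smul_eq_mul]
    linarith
  have hu0 : u ≠ 0 := fun h => (hu i₀).ne' (congrFun h i₀)
  linarith [le_specRad_of_smul_le_mulVec hB (fun i => (hu i).le) hu0 (by linarith) hεu]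

theorem IsIrreducibleMatrix.of_smul_one_sub {s : ℝ} (h : IsIrreducibleMatrix (s • 1 - B)) :
    IsIrreducibleMatrix B := fun i j => by
  induction h i j with
  | refl => rfl
  | @tail b c _ hbc ih =>
    by_cases hbc' : b = c
    · exact hbc' ▸ ih
    · exact ih.tail fun h0 => hbc (by simp [hbc', h0])

theorem IsIrreducibleMatrix.exists_pos_pow_one_add (hirr : IsIrreducibleMatrix B)
    (hB : ∀ i j, 0 ≤ B i j) : ∃ N, ∀ i j, 0 < ((1 + B) ^ N : Matrix (Fin n) (Fin n) ℝ) i j := by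
  have hle : ∀ i j, B i j ≤ (1 + B) i j := fun i j => by
    by_cases h : i = j <;> simp [one_apply, h]
  refine exists_pow_pos_of_reflTransGen (fun i j => (hB i j).trans (hle i j))
    (fun i => by simp [add_pos_of_pos_of_nonneg one_pos (hB i i)]) fun i j => ?_
  exact Relation.ReflTransGen.mono (fun a b hab => ((hB a b).lt_of_ne' hab).trans_le (hle a b))
    i j (hirr i j)

theorem IsIrreducibleMatrix.pos_of_specRad_smul_le_mulVec (hirr : IsIrreducibleMatrix B)
    (hB : ∀ i j, 0 ≤ B i j) {w : Fin n → ℝ} (hw : 0 ≤ w) (hw0 : w ≠ 0)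
    (hρw : specRad B • w ≤ B *ᵥ w) (i : Fin n) : 0 < w i := by
  obtain ⟨i₀, -⟩ := Function.ne_iff.mp hw0
  have : Nonempty (Fin n) := ⟨i₀⟩
  obtain ⟨N, hP⟩ := hirr.exists_pos_pow_one_add hB
  by_cases heig : B *ᵥ w = specRad B • w
  · have h1B : (1 + B) *ᵥ w = (1 + specRad B) • w := by
      rw [add_mulVec, one_mulVec, heig, add_smul, one_smul]
    have hPw := mulVec_pos_of_pos hP hw hw0 i
    rw [pow_mulVec_of_mulVec_eq_smul h1B, Pi.smul_apply, smul_eq_mul] at hPw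
    exact pos_of_mul_pos_right hPw (by have := specRad_nonneg B; positivity)
  · exfalso
    have hcomm : B * (1 + B) ^ N = (1 + B) ^ N * B :=
      ((Commute.one_right B).add_right (Commute.refl B)).pow_right N
    refine (lt_specRad_of_smul_lt_mulVec hB (mulVec_pos_of_pos hP hw hw0) (specRad_nonneg B)
      fun j => ?_).false
    have := mulVec_pos_of_pos hP (sub_nonneg.mpr hρw) (sub_ne_zero.mpr heig) j
    rwa [mulVec_sub, mulVec_smul, mulVec_mulVec, ← hcomm, ← mulVec_mulVec, Pi.sub_apply,
      sub_pos, Pi.smul_apply, smul_eq_mul] at this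

end PerronFrobenius

theorem IsSingularMMatrix.isUnit_principalSubmatrix {n : ℕ} {A : Matrix (Fin n) (Fin n) ℝ}
    (hA : IsSingularMMatrix A) (hirr : IsIrreducibleMatrix A) {α : Finset (Fin n)} {k : Fin n}
    (hk : k ∉ α) : IsUnit (A.principalSubmatrix α) := by
  obtain ⟨-, B, hB, rfl⟩ := hA
  have : Nonempty (Fin n) := ⟨k⟩
  rw [isUnit_iff_isUnit_det, isUnit_iff_ne_zero, Ne, ← exists_mulVec_eq_zero_iff]
  rintro ⟨v, hv0, hv⟩
  have hBv : B.principalSubmatrix α *ᵥ v = specRad B • v := by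
    have hsub : (specRad B • 1 - B).principalSubmatrix α
        = specRad B • 1 - B.principalSubmatrix α := by
      ext i j
      simp only [submatrix_apply, Matrix.sub_apply, Matrix.smul_apply, one_apply, Subtype.val_inj]
    rwa [hsub, sub_mulVec, smul_mulVec, one_mulVec, sub_eq_zero, eq_comm] at hv
  let w : Fin n → ℝ := fun i => if h : i ∈ α then |v ⟨i, h⟩| else 0
  have hw : 0 ≤ w := fun i => by
    unfold w; split_ifs <;> positivity
  have hw0 : w ≠ 0 := by
    obtain ⟨j, hj⟩ := Function.ne_iff.mp hv0
    exact Function.ne_iff.mpr ⟨j, by simpa [w] using hj⟩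
  have hBw : ∀ i, (B *ᵥ w) i = ∑ x : α, B i x * |v x| := fun i => by
    rw [mulVec, dotProduct, Finset.sum_univ_eq_sum_coe_sort_of_support (α := α) fun x hx => by
      simp [w, hx]]
    simp [w]
  have hρw : specRad B • w ≤ B *ᵥ w := fun i => by
    rw [hBw, Pi.smul_apply, smul_eq_mul]
    by_cases hi : i ∈ α
    · calc specRad B * w i = |(specRad B • v) ⟨i, hi⟩| := by
            simp [w, hi, abs_mul, abs_of_nonneg (specRad_nonneg B)]
        _ = |∑ x : α, B i x * v x| := by rw [← hBv]; rfl
        _ ≤ ∑ x : α, |B i x * v x| := Finset.abs_sum_le_sum_abs _ _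
        _ = ∑ x : α, B i x * |v x| := by simp [abs_mul, abs_of_nonneg (hB _ _)]
    · simpa [w, hi] using
        Finset.sum_nonneg fun (x : α) _ => mul_nonneg (hB i x) (abs_nonneg (v x))
  have := hirr.of_smul_one_sub.pos_of_specRad_smul_le_mulVec hB hw hw0 hρw k
  simp [w, hk] at this

theorem isFSAILowerFactor_iff {n : ℕ} {A L : Matrix (Fin n) (Fin n) ℝ}
    {S : Set (Fin n × Fin n)} (hS : S ⊆ {p | p.2 ≤ p.1}) :
    IsFSAILowerFactor A L S ↔ ∀ i, (∀ j, (i, j) ∉ S → L i j = 0) ∧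
      ∀ j, (i, j) ∈ S → (L i ᵥ* A) j = if i = j then 1 else 0 :=
  ⟨fun ⟨_, hoff, hon⟩ i => ⟨fun j hj => hoff (i, j) hj, fun j hj => hon (i, j) hj⟩,
    fun h => ⟨fun i j hij => (h i).1 j fun hij' => (hS hij').not_gt hij,
      fun p hp => (h p.1).1 p.2 hp, fun p hp => (h p.1).2 p.2 hp⟩⟩

theorem fsai_lower_exists_unique (n : ℕ) (hn : 2 ≤ n)
    (A : Matrix (Fin n) (Fin n) ℝ)
    (hA : IsSingularMMatrix A) (hirr : IsIrreducibleMatrix A)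
    (S : Set (Fin n × Fin n))
    (hS1 : S ⊆ {p : Fin n × Fin n | p.2 ≤ p.1})
    (hS3 : ((⟨n - 1, by omega⟩ : Fin n), (⟨n - 2, by omega⟩ : Fin n)) ∉ S) :
    ∃! L : Matrix (Fin n) (Fin n) ℝ, IsFSAILowerFactor A L S := by
  classical
  have hproper : ∀ i : Fin n, ∃ k, (i, k) ∉ S := fun i => by
    by_cases hi : i = ⟨n - 1, by omega⟩
    · exact ⟨_, hi ▸ hS3⟩
    · refine ⟨⟨n - 1, by omega⟩, fun hmem => hi (le_antisymm ?_ (hS1 hmem))⟩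
      exact Fin.le_def.mpr (Nat.le_sub_one_of_lt i.isLt)
  have hrow : ∀ i, ∃! r : Fin n → ℝ, (∀ j, (i, j) ∉ S → r j = 0) ∧
      ∀ j, (i, j) ∈ S → (r ᵥ* A) j = if i = j then 1 else 0 := fun i => by
    obtain ⟨k, hk⟩ := hproper i
    simpa using existsUnique_vecMul_eq_of_isUnit_principalSubmatrix
      (hA.isUnit_principalSubmatrix hirr (α := Finset.univ.filter fun j => (i, j) ∈ S)
        (by simpa using hk))
      fun j => if i = j then 1 else 0
  obtain ⟨f, hf⟩ := forall_existsUnique_iff.mp hrow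
  simp_rw [isFSAILowerFactor_iff hS1]
  exact ⟨f, fun i => hf.mpr rfl, fun L hL => funext fun i => (hf.mp (hL i)).symm⟩
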